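/- Let c ∈ ℝ, g ∈ ℝⁿ, and H a symmetric n×n matrix, and define M = [[0, gᵀ],[g, H]]. Then for every x ∈ ℝⁿ with -1 ≤ x ≤ 1, c + gᵀx + (1/2)xᵀHx ≤ c + (1/2)·Σᵢ max(κᵢ - min(λ_min(diag(κ) - M), 0), 0) for every nonnegative vector κ ∈ ℝⁿ⁺¹. -/

import Mathlib

/-
With `z = (1, x)` the objective is `c + ½ zᵀMz`, since `zᵀMz = 2gᵀx + xᵀHx`, and `|zᵢ| ≤ 1`.
For any `λ ≤ λ_min(diag κ - M)` the quadratic form of `diag κ - M` is at least `λ‖z‖²`, so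
`zᵀMz = Σ κᵢ zᵢ² - zᵀ(diag κ - M)z ≤ Σ (κᵢ - λ) zᵢ² ≤ Σ max(κᵢ - λ, 0)`, the last step because
`zᵢ² ∈ [0, 1]`. As `minEig` is a supremum, the only spectral fact needed is that its defining set
is nonempty, which the Gershgorin-type bound `zᵀAz ≥ -(Σ |Aᵢⱼ|) ‖z‖²` provides.
-/

open Matrix

/-- The smallest eigenvalue of a real symmetric matrix, characterized as the
largest `μ` such that `M - μ • 1` is positive semidefinite. -/
noncomputable def minEig {k : Type*} [Fintype k] [DecidableEq k]
    (M : Matrix k k ℝ) : ℝ :=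
  sSup {μ : ℝ | (M - μ • (1 : Matrix k k ℝ)).PosSemidef}

lemma mul_le_max_zero_of_nonneg_of_le_one {α : Type*} [Semiring α] [LinearOrder α]
    [IsOrderedRing α] (t : α) {s : α} (hs₀ : 0 ≤ s) (hs₁ : s ≤ 1) : t * s ≤ max t 0 :=
  calc t * s ≤ max t 0 * s := mul_le_mul_of_nonneg_right (le_max_left t 0) hs₀
    _ ≤ max t 0 := mul_le_of_le_one_right (le_max_right t 0) hs₁

namespace Matrix

variable {k : Type*} [Fintype k]

lemma neg_sum_abs_mul_dotProduct_self_le {R : Type*} [CommRing R] [LinearOrder R]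
    [IsStrictOrderedRing R] (A : Matrix k k R) (z : k → R) :
    -(∑ i, ∑ j, |A i j|) * (z ⬝ᵥ z) ≤ z ⬝ᵥ A *ᵥ z := by
  have hsq : ∀ i, z i ^ 2 ≤ z ⬝ᵥ z := fun i => by
    simpa only [dotProduct, sq] using
      Finset.single_le_sum (fun l _ => mul_self_nonneg (z l)) (Finset.mem_univ i)
  have hprod : ∀ i j, |z i * z j| ≤ z ⬝ᵥ z := fun i j => by
    rw [abs_mul]
    nlinarith [hsq i, hsq j, sq_abs (z i), sq_abs (z j), sq_nonneg (|z i| - |z j|)]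
  calc -(∑ i, ∑ j, |A i j|) * (z ⬝ᵥ z) = ∑ i, ∑ j, -(|A i j| * (z ⬝ᵥ z)) := by
        simp only [neg_mul, Finset.sum_mul, Finset.sum_neg_distrib]
    _ ≤ ∑ i, ∑ j, A i j * (z i * z j) := by
        gcongr with i _ j _
        calc -(|A i j| * (z ⬝ᵥ z)) ≤ -(|A i j| * |z i * z j|) := by
              gcongr; exact hprod i j
          _ = -|A i j * (z i * z j)| := by rw [abs_mul (A i j)]
          _ ≤ A i j * (z i * z j) := neg_abs_le _
    _ = z ⬝ᵥ A *ᵥ z := by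
        simp only [dotProduct, mulVec, Finset.mul_sum]
        exact Finset.sum_congr rfl fun i _ => Finset.sum_congr rfl fun j _ => by ring

variable [DecidableEq k]

lemma dotProduct_sub_smul_one_mulVec {R : Type*} [CommRing R] (A : Matrix k k R) (μ : R)
    (z : k → R) : z ⬝ᵥ (A - μ • (1 : Matrix k k R)) *ᵥ z = z ⬝ᵥ A *ᵥ z - μ * (z ⬝ᵥ z) := by
  rw [sub_mulVec, dotProduct_sub, smul_mulVec, one_mulVec, dotProduct_smul, smul_eq_mul]

lemma IsHermitian.posSemidef_sub_smul_one {A : Matrix k k ℝ} (hA : A.IsHermitian) :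
    (A - (-(∑ i, ∑ j, |A i j|)) • (1 : Matrix k k ℝ)).PosSemidef := by
  refine .of_dotProduct_mulVec_nonneg (hA.sub (isHermitian_one.smul (.all _))) fun z => ?_
  rw [star_trivial, dotProduct_sub_smul_one_mulVec]
  linarith [neg_sum_abs_mul_dotProduct_self_le A z]

lemma minEig_mul_dotProduct_self_le {A : Matrix k k ℝ} (hA : A.IsHermitian) (z : k → ℝ) :
    minEig A * (z ⬝ᵥ z) ≤ z ⬝ᵥ A *ᵥ z := by
  rcases eq_or_ne z 0 with rfl | hz
  · simp
  have hpos : 0 < z ⬝ᵥ z :=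
    lt_of_le_of_ne (dotProduct_star_self_nonneg z) (Ne.symm (dotProduct_self_eq_zero.not.mpr hz))
  have hle : minEig A ≤ (z ⬝ᵥ A *ᵥ z) / (z ⬝ᵥ z) := by
    refine csSup_le ⟨_, hA.posSemidef_sub_smul_one⟩ fun μ hμ => (le_div_iff₀ hpos).mpr ?_
    have := hμ.dotProduct_mulVec_nonneg z
    rw [star_trivial, dotProduct_sub_smul_one_mulVec] at this
    linarith
  exact (le_div_iff₀ hpos).mp hle

theorem dotProduct_mulVec_le_sum_max_sub {M : Matrix k k ℝ} (hM : M.IsHermitian) (κ : k → ℝ)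
    {μ : ℝ} (hμ : μ ≤ minEig (diagonal κ - M)) {z : k → ℝ} (hz : ∀ i, |z i| ≤ 1) :
    z ⬝ᵥ M *ᵥ z ≤ ∑ i, max (κ i - μ) 0 := by
  have hcorr : μ * (z ⬝ᵥ z) ≤ z ⬝ᵥ (diagonal κ - M) *ᵥ z :=
    (mul_le_mul_of_nonneg_right hμ (dotProduct_star_self_nonneg z)).trans
      (minEig_mul_dotProduct_self_le ((isHermitian_diagonal κ).sub hM) z)
  calc z ⬝ᵥ M *ᵥ z = z ⬝ᵥ diagonal κ *ᵥ z - z ⬝ᵥ (diagonal κ - M) *ᵥ z := by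
        rw [sub_mulVec, dotProduct_sub]; ring
    _ ≤ z ⬝ᵥ diagonal κ *ᵥ z - μ * (z ⬝ᵥ z) := by linarith
    _ = ∑ i, (κ i - μ) * z i ^ 2 := by
        simp only [dotProduct, mulVec_diagonal, Finset.mul_sum, ← Finset.sum_sub_distrib]
        exact Finset.sum_congr rfl fun i _ => by ring
    _ ≤ ∑ i, max (κ i - μ) 0 := Finset.sum_le_sum fun i _ =>
        mul_le_max_zero_of_nonneg_of_le_one _ (sq_nonneg _)
          ((sq_le_one_iff_abs_le_one _).mpr (hz i))

lemma sumElim_one_dotProduct_fromBlocks_mulVec {R m : Type*} [CommRing R] [Fintype m]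
    (g x : m → R) (H : Matrix m m R) :
    Sum.elim (fun _ => 1) x ⬝ᵥ
        fromBlocks 0 (of fun (_ : Fin 1) (j : m) => g j) (of fun (i : m) (_ : Fin 1) => g i) H *ᵥ
          Sum.elim (fun _ => 1) x
      = 2 * ∑ i, g i * x i + x ⬝ᵥ H *ᵥ x := by
  have hrow : (of fun (_ : Fin 1) (j : m) => g j) *ᵥ x = fun _ => g ⬝ᵥ x := rfl
  have hcol : (of fun (i : m) (_ : Fin 1) => g i) *ᵥ (fun _ => 1) = g := by
    ext i; simp [mulVec, dotProduct]
  rw [fromBlocks_mulVec, sumElim_dotProduct_sumElim]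
  simp only [Function.comp_def, Sum.elim_inl, Sum.elim_inr, hrow, hcol, zero_mulVec, zero_add,
    dotProduct_add, dotProduct_comm x g]
  simp only [dotProduct, Fin.sum_univ_one, one_mul]
  ring

end Matrix

theorem stmt_5_general (n : ℕ) (c : ℝ) (g : Fin n → ℝ) (H : Matrix (Fin n) (Fin n) ℝ)
    (hH : H.IsHermitian)
    (M : Matrix (Fin 1 ⊕ Fin n) (Fin 1 ⊕ Fin n) ℝ)
    (hM : M = Matrix.fromBlocks 0
      (Matrix.of fun (_ : Fin 1) (j : Fin n) => g j)
      (Matrix.of fun (i : Fin n) (_ : Fin 1) => g i) H)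
    (κ : Fin 1 ⊕ Fin n → ℝ)
    (x : Fin n → ℝ) (hx : ∀ i, -1 ≤ x i ∧ x i ≤ 1) :
    c + (∑ i, g i * x i) + (1 / 2) * (x ⬝ᵥ H.mulVec x)
      ≤ c + (1 / 2) *
        ∑ i, max (κ i - min (minEig (Matrix.diagonal κ - M)) 0) 0 := by
  have hM_herm : M.IsHermitian := by
    rw [hM, isHermitian_fromBlocks_iff]
    exact ⟨isHermitian_zero, rfl, rfl, hH⟩
  have hz : ∀ i : Fin 1 ⊕ Fin n, |Sum.elim (fun _ => (1 : ℝ)) x i| ≤ 1 := by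
    rintro (_ | i)
    · simp
    · exact abs_le.mpr (hx i)
  have hquad : Sum.elim (fun _ => 1) x ⬝ᵥ M *ᵥ Sum.elim (fun _ => 1) x
      = 2 * ∑ i, g i * x i + x ⬝ᵥ H *ᵥ x := by
    rw [hM, sumElim_one_dotProduct_fromBlocks_mulVec]
  linarith [dotProduct_mulVec_le_sum_max_sub hM_herm κ (min_le_left _ 0) hz]

theorem stmt_5 (n : ℕ) (c : ℝ) (g : Fin n → ℝ) (H : Matrix (Fin n) (Fin n) ℝ)
    (hH : H.IsHermitian)
    (M : Matrix (Fin 1 ⊕ Fin n) (Fin 1 ⊕ Fin n) ℝ)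
    (hM : M = Matrix.fromBlocks 0
      (Matrix.of fun (_ : Fin 1) (j : Fin n) => g j)
      (Matrix.of fun (i : Fin n) (_ : Fin 1) => g i) H)
    (κ : Fin 1 ⊕ Fin n → ℝ) (hκ : ∀ i, 0 ≤ κ i)
    (x : Fin n → ℝ) (hx : ∀ i, -1 ≤ x i ∧ x i ≤ 1) :
    c + (∑ i, g i * x i) + (1 / 2) * (x ⬝ᵥ H.mulVec x)
      ≤ c + (1 / 2) *
        ∑ i, max (κ i - min (minEig (Matrix.diagonal κ - M)) 0) 0 :=
  stmt_5_general n c g H hH M hM κ x hx
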